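/- If frequencies f_1, …, f_s are drawn independently and uniformly at random from [0,1], then with probability 1 the 3s×3s matrix A_s with entries given rowwise by (l_k^i · e^{i2π f_j l_k}) for j = 1,…,s, i = 0,1,2, k = 0,…,3s−1, is invertible (the pairwise distinct sample indices l_0,…,l_{3s−1} being fixed). -/

import Mathlib

/-!
Induction on the number `s` of frequencies, for any number `m` of rows per frequency. Fix the
first `s` frequencies `g` with `A_s(g)` invertible and let `x` be the new one. The last `m` rows
of `A_{s+1}` are `(l_k^i z^{l_k})_k` with `z = e^{2πix}`, so `det A_{s+1}` is a polynomial `Q` in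
`z`. In the Leibniz expansion, the monomial `z^(l_{ms} + ⋯ + l_{ms+m-1})` of largest degree comes
only from permutations sending the `m` largest columns to the last `m` rows, so its coefficient
is `det A_s(g)` times a Vandermonde determinant in these `l_k`. Hence `Q ≠ 0`, it has finitely
many roots, each attained at countably many `x`, and Fubini closes the induction.
-/

open Finset Matrix MeasureTheory Polynomial Complex Real

theorem Finset.sum_lt_sum_of_card_eq_of_forall_lt {ι M : Type*} [DecidableEq ι]
    [AddCommMonoid M] [LinearOrder M] [IsOrderedCancelAddMonoid M] {w : ι → M} {T T₀ : Finset ι}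
    (hw : ∀ a ∉ T₀, ∀ b ∈ T₀, w a < w b) (hcard : #T = #T₀) (hne : T ≠ T₀) :
    ∑ i ∈ T, w i < ∑ i ∈ T₀, w i := by
  have hout : (T \ T₀).Nonempty := by
    rw [sdiff_nonempty]
    exact fun hsub => hne (eq_of_subset_of_card_le hsub hcard.ge)
  have hin : (T₀ \ T).Nonempty := by
    rw [← card_pos, ← card_sdiff_comm hcard]
    exact hout.card_pos
  obtain ⟨a, ha, ha_max⟩ := (T \ T₀).exists_max_image w hout
  obtain ⟨b, hb, hb_min⟩ := (T₀ \ T).exists_min_image w hin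
  calc ∑ i ∈ T, w i = ∑ i ∈ T ∩ T₀, w i + ∑ i ∈ T \ T₀, w i := (sum_inter_add_sum_sdiff _ _ _).symm
    _ ≤ ∑ i ∈ T ∩ T₀, w i + #(T \ T₀) • w a := by grw [sum_le_card_nsmul _ _ _ ha_max]
    _ < ∑ i ∈ T₀ ∩ T, w i + #(T₀ \ T) • w b := by
      rw [inter_comm, card_sdiff_comm hcard]
      gcongr
      exact hw a (mem_sdiff.1 ha).2 b (mem_sdiff.1 hb).1
    _ ≤ ∑ i ∈ T₀ ∩ T, w i + ∑ i ∈ T₀ \ T, w i := by grw [card_nsmul_le_sum _ _ _ hb_min]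
    _ = ∑ i ∈ T₀, w i := sum_inter_add_sum_sdiff _ _ _

namespace Matrix

variable {n R : Type*} [Fintype n] [DecidableEq n] [CommRing R]

noncomputable def monomialRows (A : Matrix n n R) (S : Finset n) (w : n → ℕ) : Matrix n n R[X] :=
  of fun i j => C (A i j) * X ^ (if i ∈ S then w j else 0)

theorem eval_det_monomialRows (A : Matrix n n R) (S : Finset n) (w : n → ℕ) (z : R) :
    (monomialRows A S w).det.eval z = (of fun i j => A i j * z ^ (if i ∈ S then w j else 0)).det := by
  rw [← coe_evalRingHom, RingHom.map_det]
  congr 1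
  ext i j
  simp only [RingHom.mapMatrix_apply, map_apply, monomialRows, of_apply, coe_evalRingHom, eval_mul,
    eval_C, eval_pow, eval_X]

theorem prod_monomialRows_perm (A : Matrix n n R) (S : Finset n) (w : n → ℕ) (σ : Equiv.Perm n) :
    ∏ i, monomialRows A S w (σ i) i =
      C (∏ i, A (σ i) i) * X ^ ∑ i ∈ S.map σ.symm.toEmbedding, w i := by
  simp only [monomialRows, of_apply, prod_mul_distrib, ← map_prod, prod_pow_eq_pow_sum]
  rw [← univ_inter (S.map _), ← sum_ite_mem]
  simp only [mem_map_equiv, Equiv.symm_symm]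

/-- In the Leibniz expansion the permutation `σ` contributes a monomial whose degree is the weight
of the columns `σ` sends into `S`; only those sending exactly `T₀` into `S` reach this degree. -/
theorem coeff_det_monomialRows (A : Matrix n n R) {S T₀ : Finset n} {w : n → ℕ}
    (hcard : #T₀ = #S) (huniq : ∀ T : Finset n, #T = #S → ∑ j ∈ T, w j = ∑ j ∈ T₀, w j → T = T₀) :
    (monomialRows A S w).det.coeff (∑ j ∈ T₀, w j) =
      (of fun i j => if i ∈ S ∧ j ∉ T₀ then 0 else A i j).det := by
  rw [det_apply', det_apply', finsetSum_coeff]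
  refine sum_congr rfl fun σ _ => ?_
  rw [coeff_intCast_mul, prod_monomialRows_perm, coeff_C_mul_X_pow]
  congr 1
  set T := S.map σ.symm.toEmbedding
  have hT : ∀ i, i ∈ T ↔ σ i ∈ S := fun i => by simp [T, mem_map_equiv]
  by_cases hTT : T = T₀
  · rw [if_pos (by rw [hTT])]
    refine prod_congr rfl fun i _ => ?_
    rw [of_apply, if_neg fun h => h.2 (hTT ▸ (hT i).2 h.1)]
  · rw [if_neg fun h => hTT (huniq T (by simp [T]) h.symm)]
    have hsub : ¬ T ⊆ T₀ := fun hsub =>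
      hTT (eq_of_subset_of_card_le hsub (by simp [T, hcard]))
    obtain ⟨i, hiT, hiT₀⟩ := not_subset.1 hsub
    exact (prod_eq_zero (mem_univ i) (by rw [of_apply, if_pos ⟨(hT i).1 hiT, hiT₀⟩])).symm

end Matrix

theorem countable_setOf_cexp_two_pi_mul_I_eq (z : ℂ) :
    {x : ℝ | cexp (2 * π * I * x) = z}.Countable := by
  rcases Set.eq_empty_or_nonempty {x : ℝ | cexp (2 * π * I * x) = z} with h | ⟨x₀, hx₀⟩
  · simp [h]
  refine (Set.countable_range fun n : ℤ => x₀ + n).mono fun x hx => ?_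
  obtain ⟨n, hn⟩ := Complex.exp_eq_exp_iff_exists_int.1 (hx.trans hx₀.symm)
  have h2pi : 2 * π * I ≠ 0 := by simp [Real.pi_ne_zero]
  refine ⟨n, ?_⟩
  have : (x : ℂ) = x₀ + n := mul_left_cancel₀ h2pi (by rw [hn]; ring)
  exact_mod_cast this.symm

theorem volume_setOf_eval_cexp_eq_zero {Q : ℂ[X]} (hQ : Q ≠ 0) :
    volume {x : ℝ | Q.eval (cexp (2 * π * I * x)) = 0} = 0 := by
  refine Set.Countable.measure_zero (Set.Countable.mono (fun x hx => ?_)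
    ((finite_setOfPred_isRoot hQ).countable.biUnion fun z _ =>
      countable_setOf_cexp_two_pi_mul_I_eq z)) _
  exact Set.mem_biUnion (x := cexp (2 * π * I * x)) hx rfl

theorem volume_eq_zero_of_ae_volume_snoc_eq_zero {α : Type*} [MeasureSpace α]
    [SigmaFinite (volume : Measure α)] {n : ℕ} {S : Set (Fin (n + 1) → α)} (hS : MeasurableSet S)
    (h : ∀ᵐ g : Fin n → α, volume {x : α | Fin.snoc g x ∈ S} = 0) : volume S = 0 := by
  set e := MeasurableEquiv.piFinSuccAbove (fun _ : Fin (n + 1) => α) (Fin.last n)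
  have he : MeasurePreserving e.symm volume volume :=
    (volume_preserving_piFinSuccAbove (fun _ : Fin (n + 1) => α) (Fin.last n)).symm e
  rw [← he.measure_preimage hS.nullMeasurableSet, Measure.volume_eq_prod,
    Measure.prod_apply_symm (hS.preimage e.symm.measurable)]
  refine lintegral_eq_zero_of_ae_eq_zero (h.mono fun g hg => ?_)
  simpa [e, Fin.snocEquiv, Set.preimage] using hg

noncomputable def confluentExpMatrix (m s : ℕ) (l : Fin (m * s) → ℕ) (f : Fin s → ℝ) :
    Matrix (Fin (m * s)) (Fin (m * s)) ℂ :=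
  of fun r k => (l k : ℂ) ^ ((r : ℕ) % m) *
    cexp (2 * π * I * f ⟨r / m, Nat.div_lt_of_lt_mul r.isLt⟩ * l k)

theorem continuous_det_confluentExpMatrix (m s : ℕ) (l : Fin (m * s) → ℕ) :
    Continuous fun f => (confluentExpMatrix m s l f).det := by
  unfold confluentExpMatrix
  fun_prop

def lastBlock (m s : ℕ) : Finset (Fin (m * (s + 1))) := {i | m * s ≤ (i : ℕ)}

section

variable {m s : ℕ}

theorem div_eq_of_mem_lastBlock {r : Fin (m * (s + 1))} (hr : r ∈ lastBlock m s) :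
    (r : ℕ) / m = s := by
  rw [lastBlock, mem_filter_univ] at hr
  have hm : 0 < m := Nat.pos_of_ne_zero fun h => by simpa [h] using r.isLt
  exact le_antisymm (Nat.lt_succ_iff.1 (Nat.div_lt_of_lt_mul r.isLt))
    ((Nat.le_div_iff_mul_le hm).2 (by rwa [mul_comm]))

theorem div_lt_of_notMem_lastBlock {r : Fin (m * (s + 1))} (hr : r ∉ lastBlock m s) :
    (r : ℕ) / m < s :=
  Nat.div_lt_of_lt_mul (by simpa [lastBlock] using hr)

theorem confluentExpMatrix_snoc_of_mem (l : Fin (m * (s + 1)) → ℕ) (g : Fin s → ℝ)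
    (x : ℝ) {r : Fin (m * (s + 1))} (hr : r ∈ lastBlock m s) (k : Fin (m * (s + 1))) :
    confluentExpMatrix m (s + 1) l (Fin.snoc g x) r k =
      (l k : ℂ) ^ ((r : ℕ) % m) * cexp (2 * π * I * x * l k) := by
  have hlast : (⟨r / m, Nat.div_lt_of_lt_mul r.isLt⟩ : Fin (s + 1)) = Fin.last s :=
    Fin.ext (div_eq_of_mem_lastBlock hr)
  rw [confluentExpMatrix, of_apply, hlast, Fin.snoc_last]

theorem confluentExpMatrix_snoc_of_notMem (l : Fin (m * (s + 1)) → ℕ)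
    (g : Fin s → ℝ) (x : ℝ) {r : Fin (m * (s + 1))} (hr : r ∉ lastBlock m s)
    (k : Fin (m * (s + 1))) :
    confluentExpMatrix m (s + 1) l (Fin.snoc g x) r k =
      (l k : ℂ) ^ ((r : ℕ) % m) *
        cexp (2 * π * I * g ⟨r / m, div_lt_of_notMem_lastBlock hr⟩ * l k) :=
  congrArg (fun y : ℝ => (l k : ℂ) ^ ((r : ℕ) % m) * cexp (2 * π * I * y * l k))
    (Fin.snoc_castSucc (α := fun _ => ℝ) x g ⟨r / m, div_lt_of_notMem_lastBlock hr⟩)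

theorem confluentExpMatrix_snoc (l : Fin (m * (s + 1)) → ℕ) (g : Fin s → ℝ) (x : ℝ) :
    confluentExpMatrix m (s + 1) l (Fin.snoc g x) =
      of fun i j => confluentExpMatrix m (s + 1) l (Fin.snoc g 0) i j *
        cexp (2 * π * I * x) ^ (if i ∈ lastBlock m s then l j else 0) := by
  ext i j
  rw [of_apply]
  split_ifs with hi
  · rw [confluentExpMatrix_snoc_of_mem l g x hi, confluentExpMatrix_snoc_of_mem l g 0 hi,
      ← Complex.exp_nat_mul]
    simp only [ofReal_zero, mul_zero, zero_mul, Complex.exp_zero, mul_one]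
    ring_nf
  · rw [confluentExpMatrix_snoc_of_notMem l g x hi, confluentExpMatrix_snoc_of_notMem l g 0 hi,
      pow_zero, mul_one]

theorem det_confluentExpMatrix_snoc_zero_masked (l : Fin (m * (s + 1)) → ℕ)
    (g : Fin s → ℝ) :
    (of fun i j => if i ∈ lastBlock m s ∧ j ∉ lastBlock m s then 0
      else confluentExpMatrix m (s + 1) l (Fin.snoc g 0) i j).det =
      (confluentExpMatrix m s (l ∘ Fin.castAdd m) g).det *
        (vandermonde fun j : Fin m => (l (Fin.natAdd (m * s) j) : ℂ)).det := by
  set M := of fun i j => if i ∈ lastBlock m s ∧ j ∉ lastBlock m s then 0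
      else confluentExpMatrix m (s + 1) l (Fin.snoc g 0) i j
  have hinl (i : Fin (m * s)) : Fin.castAdd m i ∉ lastBlock m s := by simp [lastBlock]
  have hinr (i : Fin m) : Fin.natAdd (m * s) i ∈ lastBlock m s := by simp [lastBlock]
  have h₁₁ : (M.submatrix finSumFinEquiv finSumFinEquiv).toBlocks₁₁ =
      confluentExpMatrix m s (l ∘ Fin.castAdd m) g := by
    ext i j
    simp only [M, toBlocks₁₁, submatrix_apply, finSumFinEquiv_apply_left, of_apply, hinl,
      false_and, if_false, confluentExpMatrix_snoc_of_notMem l g 0 (hinl i)]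
    rfl
  have h₂₁ : (M.submatrix finSumFinEquiv finSumFinEquiv).toBlocks₂₁ = 0 := by
    ext i j
    simp [M, toBlocks₂₁, hinl, hinr]
  have h₂₂ : (M.submatrix finSumFinEquiv finSumFinEquiv).toBlocks₂₂ =
      (vandermonde fun j : Fin m => (l (Fin.natAdd (m * s) j) : ℂ))ᵀ := by
    ext i j
    simp [M, toBlocks₂₂, hinr, confluentExpMatrix_snoc_of_mem l g 0 (hinr i), vandermonde,
      Nat.mod_eq_of_lt i.isLt]
  rw [← det_submatrix_equiv_self finSumFinEquiv, ← fromBlocks_toBlocks (M.submatrix _ _), h₂₁,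
    det_fromBlocks_zero₂₁, h₁₁, h₂₂, det_transpose]

theorem volume_setOf_det_confluentExpMatrix_snoc_eq_zero {l : Fin (m * (s + 1)) → ℕ}
    (hl : StrictMono l) {g : Fin s → ℝ}
    (hg : (confluentExpMatrix m s (l ∘ Fin.castAdd m) g).det ≠ 0) :
    volume {x : ℝ | (confluentExpMatrix m (s + 1) l (Fin.snoc g x)).det = 0} = 0 := by
  set P := monomialRows (confluentExpMatrix m (s + 1) l (Fin.snoc g 0)) (lastBlock m s) l
  have huniq (T : Finset (Fin (m * (s + 1)))) (hT : #T = #(lastBlock m s))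
      (hsum : ∑ j ∈ T, l j = ∑ j ∈ lastBlock m s, l j) : T = lastBlock m s := by
    by_contra hne
    refine (Finset.sum_lt_sum_of_card_eq_of_forall_lt (fun a ha b hb => hl ?_) hT hne).ne hsum
    simp only [lastBlock, mem_filter_univ, not_le] at ha hb
    exact Fin.lt_def.2 (ha.trans_le hb)
  have hP : P.det ≠ 0 := by
    intro h
    have hcoeff : P.det.coeff (∑ j ∈ lastBlock m s, l j) = _ :=
      coeff_det_monomialRows _ rfl huniq
    rw [h, coeff_zero, det_confluentExpMatrix_snoc_zero_masked] at hcoeff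
    refine mul_ne_zero hg (det_vandermonde_ne_zero_iff.2 fun i j hij => ?_) hcoeff.symm
    exact (Fin.natAdd_inj _).1 (hl.injective (Nat.cast_injective hij))
  convert volume_setOf_eval_cexp_eq_zero hP using 4 with x
  rw [eval_det_monomialRows, ← confluentExpMatrix_snoc]

end

theorem ae_det_confluentExpMatrix_ne_zero (m : ℕ) :
    ∀ (s : ℕ) (l : Fin (m * s) → ℕ), StrictMono l →
      ∀ᵐ f : Fin s → ℝ, (confluentExpMatrix m s l f).det ≠ 0
  | 0, _, _ => .of_forall fun _ => by simp [det_isEmpty]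
  | s + 1, l, hl => by
    have hS := (continuous_det_confluentExpMatrix m (s + 1) l).measurable (measurableSet_singleton 0)
    refine ae_iff.2 ?_
    simp only [ne_eq, not_not]
    refine volume_eq_zero_of_ae_volume_snoc_eq_zero hS ?_
    filter_upwards [ae_det_confluentExpMatrix_ne_zero m s (l ∘ Fin.castAdd m)
      (hl.comp (Fin.strictMono_castAdd m))] with g hg
    exact volume_setOf_det_confluentExpMatrix_snoc_eq_zero hl hg

theorem stmt_3 (s : ℕ) (l : Fin (3 * s) → ℕ) (hl : StrictMono l) :
    volume {f : Fin s → ℝ | (∀ j, f j ∈ Set.Icc (0 : ℝ) 1) ∧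
      ¬ IsUnit (Matrix.of fun (r k : Fin (3 * s)) =>
          ((l k : ℂ)) ^ ((r : ℕ) % 3) *
            Complex.exp (2 * π * Complex.I * (f ⟨(r : ℕ) / 3, by have := r.isLt; omega⟩) *
              (l k : ℂ)))} = 0 := by
  refine measure_mono_null (fun f hf => ?_) (ae_iff.1 (ae_det_confluentExpMatrix_ne_zero 3 s l hl))
  rw [Set.mem_ofPred_eq, not_not]
  exact not_ne_iff.1 fun h => hf.2 ((isUnit_iff_isUnit_det _).2 (isUnit_iff_ne_zero.2 h))
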